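/- For m ≥ 2, ω = e^{2πi/m}, and 1 ≤ j ≤ m−1, the quotient C_n(ω^j)/C_n(1) tends to 0 as n → ∞, where C_n(q) is the q-Catalan polynomial and C_n(1) = C(2n,n)/(n+1). -/

import Mathlib

/-!
At a primitive `v`-th root of unity `z` with `v ≥ 2`, the `q`-integer `[k]_z` vanishes exactly
when `v ∣ k`, and `[v c]_q = [v]_q · [c]_{q^v}` where `[c]_{q^v}` takes the value `c` at `z`.
Comparing the defining identity of `C` at `n` and at `n + v`, the quotient `C (n + v) / C n` is a
ratio of four blocks `[s+1]_q ⋯ [s+v]_q`, each containing exactly one multiple of `v`. Once the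
factor `[v]_q` is cancelled from every block, a block evaluates at `z` to `(⌊s / v⌋ + 1)` times a
nonzero constant independent of `s`, which gives `|C_{n+v}(z)| ≤ 6 |C_n(z)|`. Since
`catalan (n + v) ≥ 9 catalan n` for `n ≥ 4`, the quotient `C_n(z) / catalan n` decays
geometrically along every residue class modulo `v`.
-/

open Finset Polynomial Complex Filter Topology

/-- The `q`-integer `[t]_q = 1 + q + ⋯ + q^{t-1}` as a complex polynomial. -/
noncomputable def qInt (t : ℕ) : Polynomial ℂ :=
  ∑ i ∈ Finset.range t, Polynomial.X ^ i

/-- The `q`-factorial `[n]_q! = ∏_{t=1}^n [t]_q`. -/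
noncomputable def qFact (n : ℕ) : Polynomial ℂ :=
  ∏ t ∈ Finset.Icc 1 n, qInt t

theorem Function.Periodic.prod_Ico_eq {M : Type*} [CommMonoid M] {f : ℕ → M} {v : ℕ}
    (hf : Function.Periodic f v) (s : ℕ) : ∏ k ∈ Ico s (s + v), f k = ∏ k ∈ range v, f k := by
  rw [← Nat.image_Ico_mod s v, prod_image (Nat.mod_injOn_Ico s v)]
  exact prod_congr rfl fun k _ => (hf.map_mod_nat k).symm

theorem Nat.Ioc_filter_dvd_eq_singleton {v : ℕ} (hv : 0 < v) (s : ℕ) :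
    {k ∈ Ioc s (s + v) | v ∣ k} = {v * (s / v + 1)} := by
  ext k
  simp only [mem_filter, mem_Ioc, mem_singleton]
  constructor
  · rintro ⟨⟨hsk, hks⟩, c, rfl⟩
    have hlow : s / v < c := Nat.div_lt_of_lt_mul hsk
    have hhigh : c ≤ s / v + 1 := by
      rw [← Nat.add_div_right s hv]
      exact (Nat.le_div_iff_mul_le hv).2 (by linarith)
    rw [show c = s / v + 1 by omega]
  · rintro rfl
    refine ⟨⟨Nat.lt_mul_div_succ s hv, ?_⟩, dvd_mul_right _ _⟩
    linarith [Nat.mul_div_le s v]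

theorem Nat.two_mul_div_add_one_mul_le {v : ℕ} (hv : 0 < v) (n : ℕ) :
    (2 * n / v + 1) * (2 * n / v + 2) ≤ 6 * ((n / v + 1) * ((n + 1) / v + 1)) := by
  have hA : 2 * n / v ≤ 2 * (n / v) + 1 := by
    have : 2 * n < (2 * (n / v) + 2) * v := by linarith [Nat.lt_mul_div_succ n hv]
    have := (Nat.div_lt_iff_lt_mul hv).2 this
    omega
  have ha : n / v ≤ (n + 1) / v := Nat.div_le_div_right (Nat.le_succ n)
  calc (2 * n / v + 1) * (2 * n / v + 2) ≤ (2 * (n / v) + 2) * (2 * (n / v) + 3) := by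
        exact Nat.mul_le_mul (by linarith) (by linarith)
    _ ≤ 6 * ((n / v + 1) * (n / v + 1)) := by nlinarith
    _ ≤ 6 * ((n / v + 1) * ((n + 1) / v + 1)) := by gcongr

theorem three_mul_catalan_le {n : ℕ} (hn : 4 ≤ n) : 3 * catalan n ≤ catalan (n + 1) := by
  have h := Nat.succ_mul_centralBinom_succ n
  rw [← succ_mul_catalan_eq_centralBinom, ← succ_mul_catalan_eq_centralBinom] at h
  have hrec : (n + 2) * catalan (n + 1) = 2 * (2 * n + 1) * catalan n := by
    apply Nat.eq_of_mul_eq_mul_left (Nat.succ_pos n)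
    linarith
  nlinarith

theorem pow_mul_catalan_le {n : ℕ} (hn : 4 ≤ n) (k : ℕ) :
    3 ^ k * catalan n ≤ catalan (n + k) := by
  induction k with
  | zero => simp
  | succ k ih =>
    calc 3 ^ (k + 1) * catalan n = 3 * (3 ^ k * catalan n) := by ring
      _ ≤ 3 * catalan (n + k) := Nat.mul_le_mul_left 3 ih
      _ ≤ catalan (n + (k + 1)) := three_mul_catalan_le (by omega)

theorem tendsto_zero_of_add_le_mul {r : ℕ → ℝ} {c : ℝ} {v N : ℕ} (hv : 0 < v) (hc0 : 0 ≤ c)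
    (hc1 : c < 1) (hr : ∀ n, 0 ≤ r n) (h : ∀ n, N ≤ n → r (n + v) ≤ c * r n) :
    Tendsto r atTop (𝓝 0) := by
  set M := ∑ i ∈ range v, r (N + i)
  have hblock : ∀ k i, i < v → r (N + i + k * v) ≤ c ^ k * M := by
    intro k
    induction k with
    | zero =>
      intro i hi
      simpa using single_le_sum (fun i _ => hr (N + i)) (mem_range.2 hi)
    | succ k ih =>
      intro i hi
      calc r (N + i + (k + 1) * v) = r (N + i + k * v + v) := by ring_nf
        _ ≤ c * r (N + i + k * v) := h _ (by omega)
        _ ≤ c * (c ^ k * M) := mul_le_mul_of_nonneg_left (ih i hi) hc0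
        _ = c ^ (k + 1) * M := by ring
  have hbound : ∀ n, r (n + N) ≤ c ^ (n / v) * M := by
    intro n
    have := hblock (n / v) (n % v) (Nat.mod_lt n hv)
    rwa [add_assoc, Nat.mod_add_div' n v, add_comm] at this
  have hgeom : Tendsto (fun n => c ^ (n / v) * M) atTop (𝓝 0) := by
    simpa using ((tendsto_pow_atTop_nhds_zero_of_lt_one hc0 hc1).comp
      (Nat.tendsto_div_const_atTop hv.ne')).mul_const M
  exact (tendsto_add_atTop_iff_nat N).1 (squeeze_zero (fun n => hr _) hbound hgeom)

theorem IsPrimitiveRoot.one_lt_orderOf_pow {M : Type*} [CommMonoid M] {ω : M} {m j : ℕ}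
    (hω : IsPrimitiveRoot ω m) (hj0 : 0 < j) (hjm : j < m) : 1 < orderOf (ω ^ j) := by
  have hfin : IsOfFinOrder (ω ^ j) := isOfFinOrder_iff_pow_eq_one.2
    ⟨m, by omega, by rw [← pow_mul, mul_comm, pow_mul, hω.pow_eq_one, one_pow]⟩
  have hne : ω ^ j ≠ 1 := fun h => by
    have := Nat.le_of_dvd hj0 ((hω.pow_eq_one_iff_dvd j).1 h)
    omega
  have hpos := hfin.orderOf_pos
  have hne_one := mt orderOf_eq_one_iff.1 hne
  omega

theorem qInt_mul_X_sub_one (t : ℕ) : qInt t * (X - 1) = X ^ t - 1 := by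
  simpa [qInt] using geom_sum_mul (X : ℂ[X]) t

theorem qInt_ne_zero {t : ℕ} (ht : t ≠ 0) : qInt t ≠ 0 := by
  intro h
  have := congrArg (eval 1) h
  simp [qInt, ht] at this

theorem qFact_ne_zero (n : ℕ) : qFact n ≠ 0 :=
  prod_ne_zero_iff.2 fun t ht => qInt_ne_zero (by simp at ht; omega)

theorem qFact_add (n w : ℕ) : qFact (n + w) = qFact n * ∏ k ∈ Ioc n (n + w), qInt k := by
  have hIcc (n : ℕ) : Icc 1 n = Ioc 0 n := Icc_add_one_left_eq_Ioc 0 n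
  simp only [qFact, hIcc]
  exact (prod_Ioc_consecutive _ (Nat.zero_le n) (Nat.le_add_right n w)).symm

theorem qInt_mul_comp (v c : ℕ) : qInt (v * c) = qInt v * (qInt c).comp (X ^ v) := by
  apply mul_right_cancel₀ (X_sub_C_ne_zero (1 : ℂ))
  have h := congrArg (·.comp (X ^ v)) (qInt_mul_X_sub_one c)
  simp only [mul_comp, sub_comp, X_comp, one_comp, X_pow_comp, ← pow_mul] at h
  rw [C_1, qInt_mul_X_sub_one, mul_right_comm, qInt_mul_X_sub_one]
  linear_combination -h

/-- The block `[s+1]_q ⋯ [s+v]_q` divided by `[v]_q`, the factor that vanishes at the primitive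
`v`-th roots of unity. -/
noncomputable def qWindowReduced (v s : ℕ) : ℂ[X] :=
  (qInt (s / v + 1)).comp (X ^ v) * ∏ k ∈ Ioc s (s + v) with ¬ v ∣ k, qInt k

theorem prod_Ioc_qInt_eq {v : ℕ} (hv : 0 < v) (s : ℕ) :
    ∏ k ∈ Ioc s (s + v), qInt k = qInt v * qWindowReduced v s := by
  rw [← prod_filter_mul_prod_filter_not (Ioc s (s + v)) (v ∣ ·),
    Nat.Ioc_filter_dvd_eq_singleton hv, prod_singleton, qInt_mul_comp, qWindowReduced, mul_assoc]

theorem qCatalan_add_mul_qWindowReduced {C : ℕ → ℂ[X]}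
    (hC : ∀ n, C n * (qInt (n + 1) * (qFact n) ^ 2) = qFact (2 * n)) {v : ℕ} (hv : 0 < v)
    (n : ℕ) :
    C (n + v) * (qWindowReduced v n * qWindowReduced v (n + 1)) =
      C n * (qWindowReduced v (2 * n) * qWindowReduced v (2 * n + v)) := by
  have hsucc (k : ℕ) : qFact (k + 1) = qFact k * qInt (k + 1) := by
    rw [qFact_add, Nat.Ioc_succ_singleton, prod_singleton]
  have hden : qInt (n + v + 1) * qFact (n + v) ^ 2 =
      qInt (n + 1) * qFact n ^ 2 * qInt v ^ 2 *
        (qWindowReduced v n * qWindowReduced v (n + 1)) := by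
    rw [sq, ← mul_assoc, mul_comm (qInt _), ← hsucc, show n + v + 1 = n + 1 + v by ring,
      qFact_add (n + 1), hsucc, qFact_add n, prod_Ioc_qInt_eq hv, prod_Ioc_qInt_eq hv]
    ring
  have hnum : qFact (2 * (n + v)) = C n * (qInt (n + 1) * qFact n ^ 2 * qInt v ^ 2 *
      (qWindowReduced v (2 * n) * qWindowReduced v (2 * n + v))) := by
    rw [show 2 * (n + v) = 2 * n + v + v by ring, qFact_add (2 * n + v), qFact_add (2 * n),
      ← hC n, prod_Ioc_qInt_eq hv, prod_Ioc_qInt_eq hv]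
    ring
  have hne : qInt (n + 1) * qFact n ^ 2 * qInt v ^ 2 ≠ 0 := by
    have := qInt_ne_zero (Nat.succ_ne_zero n)
    have := qInt_ne_zero hv.ne'
    have := qFact_ne_zero n
    positivity
  apply mul_left_cancel₀ hne
  linear_combination (hC (n + v)).trans hnum - C (n + v) * hden

section PrimitiveRoot

variable {v : ℕ} {z : ℂ}

theorem eval_qInt (z : ℂ) (k : ℕ) : (qInt k).eval z = ∑ i ∈ range k, z ^ i := by
  simp [qInt, eval_finsetSum]

theorem IsPrimitiveRoot.eval_qInt_add (hz : IsPrimitiveRoot z v) (hv : 1 < v) (k : ℕ) :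
    (qInt (k + v)).eval z = (qInt k).eval z := by
  rw [eval_qInt, eval_qInt, sum_range_add]
  simp_rw [pow_add, ← mul_sum, hz.geom_sum_eq_zero hv, mul_zero, add_zero]

theorem IsPrimitiveRoot.eval_qInt_ne_zero (hz : IsPrimitiveRoot z v) {k : ℕ} (hk : ¬ v ∣ k) :
    (qInt k).eval z ≠ 0 := by
  intro h
  have := geom_sum_mul z k
  rw [← eval_qInt, h, zero_mul, eq_comm, sub_eq_zero, hz.pow_eq_one_iff_dvd] at this
  exact hk this

theorem IsPrimitiveRoot.prod_Ioc_filter_eval_qInt (hz : IsPrimitiveRoot z v) (hv : 1 < v)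
    (s : ℕ) : ∏ k ∈ Ioc s (s + v) with ¬ v ∣ k, (qInt k).eval z =
      ∏ k ∈ range v with ¬ v ∣ k, (qInt k).eval z := by
  have hper : Function.Periodic (fun k => if ¬ v ∣ k then (qInt k).eval z else 1) v := by
    intro k
    simp only [Nat.dvd_add_self_right, hz.eval_qInt_add hv]
  rw [prod_filter, prod_filter, ← Ico_add_one_add_one_eq_Ioc, add_right_comm]
  exact hper.prod_Ico_eq (s + 1)

theorem IsPrimitiveRoot.eval_qWindowReduced (hz : IsPrimitiveRoot z v) (hv : 1 < v) (s : ℕ) :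
    (qWindowReduced v s).eval z =
      (s / v + 1 : ℕ) * ∏ k ∈ range v with ¬ v ∣ k, (qInt k).eval z := by
  rw [qWindowReduced, eval_mul, eval_comp, eval_prod, hz.prod_Ioc_filter_eval_qInt hv]
  simp [hz.pow_eq_one, qInt]

theorem IsPrimitiveRoot.norm_eval_qCatalan_add_le {C : ℕ → ℂ[X]}
    (hC : ∀ n, C n * (qInt (n + 1) * (qFact n) ^ 2) = qFact (2 * n))
    (hz : IsPrimitiveRoot z v) (hv : 1 < v) (n : ℕ) :
    ‖(C (n + v)).eval z‖ ≤ 6 * ‖(C n).eval z‖ := by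
  have hv0 : 0 < v := by omega
  have h := congrArg (‖eval z ·‖) (qCatalan_add_mul_qWindowReduced hC hv0 n)
  simp only [eval_mul, hz.eval_qWindowReduced hv, Nat.add_div_right _ hv0,
    norm_mul, Complex.norm_natCast] at h
  set P := ‖∏ k ∈ range v with ¬ v ∣ k, (qInt k).eval z‖
  have hP : 0 < P := norm_pos_iff.2 (prod_ne_zero_iff.2 fun k hk =>
    hz.eval_qInt_ne_zero (mem_filter.1 hk).2)
  have hbound : ((2 * n / v + 1 : ℕ) : ℝ) * (2 * n / v + 1 + 1 : ℕ) ≤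
      6 * (((n / v + 1 : ℕ) : ℝ) * ((n + 1) / v + 1 : ℕ)) := by
    exact_mod_cast Nat.two_mul_div_add_one_mul_le hv0 n
  set a : ℝ := ((n / v + 1 : ℕ) : ℝ) * ((n + 1) / v + 1 : ℕ)
  refine le_of_mul_le_mul_right ?_ (by positivity : 0 < a * P ^ 2)
  calc ‖(C (n + v)).eval z‖ * (a * P ^ 2)
      = ‖(C n).eval z‖ * (((2 * n / v + 1 : ℕ) : ℝ) * (2 * n / v + 1 + 1 : ℕ) * P ^ 2) := by
        linear_combination h
    _ ≤ ‖(C n).eval z‖ * (6 * a * P ^ 2) := by gcongr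
    _ = 6 * ‖(C n).eval z‖ * (a * P ^ 2) := by ring

end PrimitiveRoot

theorem IsPrimitiveRoot.tendsto_eval_qCatalan_div_catalan {C : ℕ → ℂ[X]}
    (hC : ∀ n, C n * (qInt (n + 1) * (qFact n) ^ 2) = qFact (2 * n))
    {v : ℕ} {z : ℂ} (hz : IsPrimitiveRoot z v) (hv : 1 < v) :
    Tendsto (fun n => (C n).eval z / catalan n) atTop (𝓝 0) := by
  rw [tendsto_zero_iff_norm_tendsto_zero]
  simp only [norm_div, Complex.norm_natCast]
  refine tendsto_zero_of_add_le_mul (v := v) (N := 4) (c := 2 / 3) (by omega) (by norm_num)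
    (by norm_num) (fun n => by positivity) fun n hn => ?_
  have hcat : (9 : ℝ) * catalan n ≤ catalan (n + v) := by
    have h9 : 9 ≤ 3 ^ v := by
      calc 9 = 3 ^ 2 := by norm_num
        _ ≤ 3 ^ v := Nat.pow_le_pow_right (by norm_num) hv
    exact_mod_cast (Nat.mul_le_mul_right _ h9).trans (pow_mul_catalan_le hn v)
  have hpos : (0 : ℝ) < catalan n := by
    refine Nat.cast_pos.2 (Nat.pos_of_ne_zero fun h => Nat.centralBinom_ne_zero n ?_)
    rw [← succ_mul_catalan_eq_centralBinom, h, mul_zero]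
  calc ‖(C (n + v)).eval z‖ / catalan (n + v)
      ≤ 6 * ‖(C n).eval z‖ / (9 * catalan n) :=
        div_le_div₀ (by positivity) (hz.norm_eval_qCatalan_add_le hC hv n) (by positivity) hcat
    _ = 2 / 3 * (‖(C n).eval z‖ / catalan n) := by field_simp; ring

theorem stmt_18_general (m : ℕ)
    (ω : ℂ) (hω : ω = Complex.exp (2 * Real.pi * Complex.I / m))
    (j : ℕ) (hj1 : 1 ≤ j) (hj2 : j ≤ m - 1)
    (C : ℕ → Polynomial ℂ)
    (hC : ∀ n, C n * (qInt (n + 1) * (qFact n) ^ 2) = qFact (2 * n)) :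
    Tendsto (fun n => (C n).eval (ω ^ j) / ((Nat.choose (2 * n) n : ℂ) / ((n : ℂ) + 1)))
      atTop (𝓝 0) := by
  have hprim : IsPrimitiveRoot ω m := hω ▸ Complex.isPrimitiveRoot_exp m (by omega)
  have hcatalan (n : ℕ) : (Nat.choose (2 * n) n : ℂ) / ((n : ℂ) + 1) = catalan n := by
    rw [div_eq_iff (by exact_mod_cast n.succ_ne_zero), ← Nat.centralBinom_eq_two_mul_choose,
      ← succ_mul_catalan_eq_centralBinom]
    push_cast
    ring
  simp only [hcatalan]
  exact (IsPrimitiveRoot.orderOf (ω ^ j)).tendsto_eval_qCatalan_div_catalan hC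
    (hprim.one_lt_orderOf_pow hj1 (by omega))

theorem stmt_18 (m : ℕ) (hm : 2 ≤ m)
    (ω : ℂ) (hω : ω = Complex.exp (2 * Real.pi * Complex.I / m))
    (j : ℕ) (hj1 : 1 ≤ j) (hj2 : j ≤ m - 1)
    (C : ℕ → Polynomial ℂ)
    (hC : ∀ n, C n * (qInt (n + 1) * (qFact n) ^ 2) = qFact (2 * n)) :
    Tendsto (fun n => (C n).eval (ω ^ j) / ((Nat.choose (2 * n) n : ℂ) / ((n : ℂ) + 1)))
      atTop (𝓝 0) :=
  stmt_18_general m ω hω j hj1 hj2 C hC
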